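/- Let d ≥ 1, let H : ℝ^d × ℝ^d → ℝ be continuously differentiable, and let q, p, δq, δp : [t_a, t_b] → ℝ^d be continuously differentiable curves such that (q, p) satisfies Hamilton's equations q̇(t) = ∇_p H(q(t), p(t)) and ṗ(t) = −∇_q H(q(t), p(t)) for all t ∈ [t_a, t_b]. Define S(ε) = ∫_{t_a}^{t_b} [(p(t) + ε δp(t))ᵀ (q̇(t) + ε δq̇(t)) − H(q(t) + ε δq(t), p(t) + ε δp(t))] dt. Then S'(0) = p(t_b)ᵀ δq(t_b) − p(t_a)ᵀ δq(t_a); in particular, if δq(t_a) = δq(t_b) = 0 then S'(0) = 0. -/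

import Mathlib

open MeasureTheory intervalIntegral Set
open scoped RealInnerProductSpace

/-! The action `S(ε)` is the integral of the phase-space Lagrangian `L(q, p, v) = ⟪p, v⟫ - H(q, p)`
along the line `(q, p, q̇) + ε (δq, δp, δq̇)`, so differentiating under the integral sign gives
`S'(0) = ∫ dL(q, p, q̇)(δq, δp, δq̇)`. Along a solution of Hamilton's equations the `δp`-terms of
the integrand cancel and the remaining terms are `⟪p, δq̇⟫ + ⟪ṗ, δq⟫ = d/dt ⟪p, δq⟫`, so the
integral reduces to the boundary term. -/

section Leibniz

variable {V E : Type*} [NormedAddCommGroup V] [NormedSpace ℝ V]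
  [NormedAddCommGroup E] [NormedSpace ℝ E]

theorem hasDerivAt_comp_add_smul {L : V → E} {x v : V} {ε : ℝ}
    (hL : DifferentiableAt ℝ L (x + ε • v)) :
    HasDerivAt (fun ε : ℝ => L (x + ε • v)) (fderiv ℝ L (x + ε • v) v) ε := by
  have hline : HasDerivAt (fun ε : ℝ => x + ε • v) v ε := by
    simpa using ((hasDerivAt_id ε).smul_const v).const_add x
  exact hL.hasFDerivAt.comp_hasDerivAt ε hline

theorem hasDerivAt_intervalIntegral_comp_add_smul {L : V → E} (hL : ContDiff ℝ 1 L)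
    {z w : ℝ → V} {a b : ℝ} (hz : ContinuousOn z (uIcc a b)) (hw : ContinuousOn w (uIcc a b))
    (ε₀ : ℝ) :
    HasDerivAt (fun ε => ∫ t in a..b, L (z t + ε • w t))
      (∫ t in a..b, fderiv ℝ L (z t + ε₀ • w t) (w t)) ε₀ := by
  have hsnd {f : ℝ → V} (hf : ContinuousOn f (uIcc a b)) :
      ContinuousOn (fun x : ℝ × ℝ => f x.2) (univ ×ˢ uIcc a b) :=
    hf.comp continuousOn_snd fun _ hx => hx.2
  have hF' : ContinuousOn (fun x : ℝ × ℝ => fderiv ℝ L (z x.2 + x.1 • w x.2) (w x.2))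
      (univ ×ˢ uIcc a b) :=
    ((hL.continuous_fderiv one_ne_zero).comp_continuousOn
      ((hsnd hz).add (continuousOn_fst.smul (hsnd hw)))).clm_apply (hsnd hw)
  obtain ⟨C, hC⟩ := ((isCompact_closedBall ε₀ 1).prod isCompact_uIcc).exists_bound_of_continuousOn
    (hF'.mono (prod_mono (subset_univ _) le_rfl))
  have hslice (ε : ℝ) : ContinuousOn (fun t => L (z t + ε • w t)) (uIcc a b) :=
    hL.continuous.comp_continuousOn (hz.add (continuousOn_const.smul hw))
  refine (hasDerivAt_integral_of_dominated_loc_of_deriv_le (bound := fun _ => C)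
    (Metric.closedBall_mem_nhds ε₀ one_pos)
    (.of_forall fun ε => ((hslice ε).mono uIoc_subset_uIcc).aestronglyMeasurable measurableSet_uIoc)
    (hslice ε₀).intervalIntegrable
    ((hF'.comp (Continuous.continuousOn (by fun_prop)) fun t ht => ⟨mem_univ ε₀, ht⟩).mono
      uIoc_subset_uIcc |>.aestronglyMeasurable measurableSet_uIoc)
    (.of_forall fun t ht ε hε => hC (ε, t) ⟨hε, uIoc_subset_uIcc ht⟩)
    intervalIntegrable_const
    (.of_forall fun t _ ε _ => hasDerivAt_comp_add_smul (hL.differentiable one_ne_zero _))).2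

end Leibniz

theorem integral_eq_sub_of_hasDerivWithinAt_uIcc {G : Type*} [NormedAddCommGroup G]
    [NormedSpace ℝ G] [CompleteSpace G] {f f' : ℝ → G} {a b : ℝ}
    (hf : ∀ t ∈ uIcc a b, HasDerivWithinAt f (f' t) (uIcc a b) t)
    (hf' : IntervalIntegrable f' volume a b) :
    ∫ t in a..b, f' t = f b - f a :=
  integral_eq_sub_of_hasDeriv_right (HasDerivWithinAt.continuousOn hf)
    (fun t ht => ((hf t (Ioo_subset_Icc_self ht)).hasDerivAt
      (Icc_mem_nhds ht.1 ht.2)).hasDerivWithinAt) hf'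

section PhaseSpace

variable {E F : Type*} [NormedAddCommGroup E] [InnerProductSpace ℝ E]
  [NormedAddCommGroup F] [InnerProductSpace ℝ F]

theorem fderiv_apply_eq_inner_gradient_add_inner_gradient [CompleteSpace E] [CompleteSpace F]
    {H : E × F → ℝ} {x : E} {y : F} (hH : DifferentiableAt ℝ H (x, y)) (u : E) (v : F) :
    fderiv ℝ H (x, y) (u, v) =
      ⟪gradient (fun x' => H (x', y)) x, u⟫ + ⟪gradient (fun y' => H (x, y')) y, v⟫ := by
  have hx : HasFDerivAt (fun x' => H (x', y)) ((fderiv ℝ H (x, y)).comp (.inl ℝ E F)) x :=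
    hH.hasFDerivAt.comp x (hasFDerivAt_prodMk_left x y)
  have hy : HasFDerivAt (fun y' => H (x, y')) ((fderiv ℝ H (x, y)).comp (.inr ℝ E F)) y :=
    hH.hasFDerivAt.comp y (hasFDerivAt_prodMk_right x y)
  rw [inner_gradient_left, inner_gradient_left, hx.fderiv, hy.fderiv]
  simp [← map_add]

def phaseLagrangian (H : E × E → ℝ) (z : E × E × E) : ℝ := ⟪z.2.1, z.2.2⟫ - H (z.1, z.2.1)

theorem ContDiff.phaseLagrangian {H : E × E → ℝ} (hH : ContDiff ℝ 1 H) :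
    ContDiff ℝ 1 (phaseLagrangian H) :=
  (contDiff_snd.fst.inner ℝ contDiff_snd.snd).sub (hH.comp (contDiff_fst.prodMk contDiff_snd.fst))

theorem fderiv_phaseLagrangian_apply {H : E × E → ℝ} {q p : E} (hH : DifferentiableAt ℝ H (q, p))
    (v u r w : E) :
    fderiv ℝ (phaseLagrangian H) (q, p, v) (u, r, w) =
      ⟪r, v⟫ + ⟪p, w⟫ - fderiv ℝ H (q, p) (u, r) := by
  have hsnd : HasFDerivAt (Prod.snd : E × E × E → E × E) (ContinuousLinearMap.snd ℝ E (E × E))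
      (q, p, v) := hasFDerivAt_snd
  have hL : HasFDerivAt (phaseLagrangian H) _ (q, p, v) :=
    (hsnd.fst.inner ℝ hsnd.snd).sub
      (hH.hasFDerivAt.comp (q, p, v) (hasFDerivAt_fst.prodMk hsnd.fst))
  rw [hL.fderiv]
  simp [real_inner_comm, add_comm]

theorem fderiv_phaseLagrangian_of_hamilton [CompleteSpace E] {H : E × E → ℝ} {q p v p' : E}
    (hH : DifferentiableAt ℝ H (q, p)) (hv : v = gradient (fun y => H (q, y)) p)
    (hp' : p' = -gradient (fun x => H (x, p)) q) (u r w : E) :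
    fderiv ℝ (phaseLagrangian H) (q, p, v) (u, r, w) = ⟪p, w⟫ + ⟪p', u⟫ := by
  rw [fderiv_phaseLagrangian_apply hH, fderiv_apply_eq_inner_gradient_add_inner_gradient hH, hp',
    hv, inner_neg_left, real_inner_comm r]
  ring

end PhaseSpace

theorem first_variation_along_hamiltonian_solution_general
    (d : ℕ)
    (H : EuclideanSpace ℝ (Fin d) × EuclideanSpace ℝ (Fin d) → ℝ)
    (hH : ContDiff ℝ 1 H)
    (ta tb : ℝ) (htab : ta ≤ tb)
    (q p δq δp q' p' δq' δp' : ℝ → EuclideanSpace ℝ (Fin d))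
    (hq : ∀ t ∈ Icc ta tb, HasDerivWithinAt q (q' t) (Icc ta tb) t)
    (hp : ∀ t ∈ Icc ta tb, HasDerivWithinAt p (p' t) (Icc ta tb) t)
    (hδq : ∀ t ∈ Icc ta tb, HasDerivWithinAt δq (δq' t) (Icc ta tb) t)
    (hδp : ∀ t ∈ Icc ta tb, HasDerivWithinAt δp (δp' t) (Icc ta tb) t)
    (hq' : ContinuousOn q' (Icc ta tb))
    (hp' : ContinuousOn p' (Icc ta tb))
    (hδq' : ContinuousOn δq' (Icc ta tb))
    (hamq : ∀ t ∈ Icc ta tb, q' t = gradient (fun y => H (q t, y)) (p t))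
    (hamp : ∀ t ∈ Icc ta tb, p' t = -gradient (fun x => H (x, p t)) (q t))
    (S : ℝ → ℝ)
    (hS : ∀ ε : ℝ, S ε = ∫ t in ta..tb,
      (⟪p t + ε • δp t, q' t + ε • δq' t⟫
        - H (q t + ε • δq t, p t + ε • δp t))) :
    HasDerivAt S (⟪p tb, δq tb⟫ - ⟪p ta, δq ta⟫) 0 ∧
      (δq ta = 0 → δq tb = 0 → HasDerivAt S 0 0) := by
  rw [← uIcc_of_le htab] at hq hp hδq hδp hq' hp' hδq' hamq hamp
  have hS' : S = fun ε => ∫ t in ta..tb,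
      phaseLagrangian H ((q t, p t, q' t) + ε • (δq t, δp t, δq' t)) := funext hS
  have hqc := HasDerivWithinAt.continuousOn hq
  have hpc := HasDerivWithinAt.continuousOn hp
  have hδqc := HasDerivWithinAt.continuousOn hδq
  have hboundary : ∫ t in ta..tb, fderiv ℝ (phaseLagrangian H)
      ((q t, p t, q' t) + (0 : ℝ) • (δq t, δp t, δq' t)) (δq t, δp t, δq' t) =
      ⟪p tb, δq tb⟫ - ⟪p ta, δq ta⟫ := by
    rw [← integral_eq_sub_of_hasDerivWithinAt_uIcc (fun t ht => (hp t ht).inner ℝ (hδq t ht))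
      ((hpc.inner hδq').add (hp'.inner hδqc)).intervalIntegrable]
    refine integral_congr fun t ht => ?_
    simpa only [zero_smul, add_zero] using fderiv_phaseLagrangian_of_hamilton
      (hH.differentiable one_ne_zero _) (hamq t ht) (hamp t ht) (δq t) (δp t) (δq' t)
  have hderiv := hasDerivAt_intervalIntegral_comp_add_smul hH.phaseLagrangian
    (hqc.prodMk (hpc.prodMk hq')) (hδqc.prodMk ((HasDerivWithinAt.continuousOn hδp).prodMk hδq')) 0
  rw [hboundary, ← hS'] at hderiv
  refine ⟨hderiv, fun hta htb => ?_⟩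
  simpa [hta, htb] using hderiv

/-- If the C¹ pair `(q, p)` satisfies Hamilton's equations on
`[t_a, t_b]`, then the first variation of the action along C¹ variations
`(δq, δp)` equals `p(t_b)ᵀ δq(t_b) − p(t_a)ᵀ δq(t_a)`; in particular it vanishes
when `δq(t_a) = δq(t_b) = 0`. -/
theorem first_variation_along_hamiltonian_solution
    (d : ℕ) (hd : 1 ≤ d)
    (H : EuclideanSpace ℝ (Fin d) × EuclideanSpace ℝ (Fin d) → ℝ)
    (hH : ContDiff ℝ 1 H)
    (ta tb : ℝ) (htab : ta ≤ tb)
    (q p δq δp q' p' δq' δp' : ℝ → EuclideanSpace ℝ (Fin d))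
    (hq : ∀ t ∈ Icc ta tb, HasDerivWithinAt q (q' t) (Icc ta tb) t)
    (hp : ∀ t ∈ Icc ta tb, HasDerivWithinAt p (p' t) (Icc ta tb) t)
    (hδq : ∀ t ∈ Icc ta tb, HasDerivWithinAt δq (δq' t) (Icc ta tb) t)
    (hδp : ∀ t ∈ Icc ta tb, HasDerivWithinAt δp (δp' t) (Icc ta tb) t)
    (hq' : ContinuousOn q' (Icc ta tb))
    (hp' : ContinuousOn p' (Icc ta tb))
    (hδq' : ContinuousOn δq' (Icc ta tb))
    (hδp' : ContinuousOn δp' (Icc ta tb))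
    (hamq : ∀ t ∈ Icc ta tb, q' t = gradient (fun y => H (q t, y)) (p t))
    (hamp : ∀ t ∈ Icc ta tb, p' t = -gradient (fun x => H (x, p t)) (q t))
    (S : ℝ → ℝ)
    (hS : ∀ ε : ℝ, S ε = ∫ t in ta..tb,
      (⟪p t + ε • δp t, q' t + ε • δq' t⟫
        - H (q t + ε • δq t, p t + ε • δp t))) :
    HasDerivAt S (⟪p tb, δq tb⟫ - ⟪p ta, δq ta⟫) 0 ∧
      (δq ta = 0 → δq tb = 0 → HasDerivAt S 0 0) :=
  first_variation_along_hamiltonian_solution_general d H hH ta tb htab q p δq δp q' p' δq' δp' hq hp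
    hδq hδp hq' hp' hδq' hamq hamp S hS
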